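/- An even-order S-QDSDD real symmetric tensor with all positive diagonal entries is positive definite. -/

import Mathlib

/-!
Let `λ ≤ 0` be an H-eigenvalue with eigenvector `x`, and let `t` maximise `|x t|`. Pick `j` on the
other side of the partition `S ∪ Sᶜ` from `t`. Bounding the eigenvalue equation in rows `t` and `j`
by `|x t| ^ k`, except for the term `a_{tj…j} x_j ^ k` in row `t`, gives the Brauer-type bound
`(|λ - a_{t…t}| - r_t^j(A)) |λ - a_{j…j}| ≤ |a_{tj…j}| r_j(A)`.
Since the diagonal is positive, `λ ≤ 0` only increases the left-hand side, which contradicts the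
S-QDSDD inequality for the pair `(t, j)`.
-/

open Finset

/-- off-diagonal row sum r_i(A) for a real tensor of order k+1, dimension n -/
noncomputable def rT {n k : ℕ} (A : (Fin (k+1) → Fin n) → ℝ) (i : Fin n) : ℝ :=
  ∑ α ∈ Finset.univ.filter (fun α : Fin k → Fin n => α ≠ fun _ => i),
    |A (Fin.cons i α)|

/-- r_i^j(A) = r_i(A) - |a_{ij...j}| -/
noncomputable def rTj {n k : ℕ} (A : (Fin (k+1) → Fin n) → ℝ) (i j : Fin n) : ℝ :=
  rT A i - |A (Fin.cons i fun _ => j)|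

/-- r_j^{Δ^S}(A): sum over index tuples all lying in S, excluding the diagonal tuple -/
noncomputable def rDelta {n k : ℕ} (A : (Fin (k+1) → Fin n) → ℝ) (S : Finset (Fin n))
    (j : Fin n) : ℝ :=
  ∑ α ∈ Finset.univ.filter (fun α : Fin k → Fin n => (∀ l, α l ∈ S) ∧ α ≠ fun _ => j),
    |A (Fin.cons j α)|

/-- r_j^{Δ^S-complement}(A): sum over index tuples not all lying in S -/
noncomputable def rDeltaC {n k : ℕ} (A : (Fin (k+1) → Fin n) → ℝ) (S : Finset (Fin n))
    (j : Fin n) : ℝ :=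
  ∑ α ∈ Finset.univ.filter (fun α : Fin k → Fin n => ¬ (∀ l, α l ∈ S)),
    |A (Fin.cons j α)|

/-- the tensor is symmetric: entries invariant under permutations of all indices -/
def SymTensor {n k : ℕ} (A : (Fin (k+1) → Fin n) → ℝ) : Prop :=
  ∀ (σ : Equiv.Perm (Fin (k+1))) (f : Fin (k+1) → Fin n), A (f ∘ σ) = A f

/-- λ is an H-eigenvalue of the real tensor A -/
def IsHEig {n k : ℕ} (A : (Fin (k+1) → Fin n) → ℝ) (lam : ℝ) : Prop :=
  ∃ x : Fin n → ℝ, x ≠ 0 ∧ ∀ i,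
    (∑ α : Fin k → Fin n, A (Fin.cons i α) * ∏ l, x (α l)) = lam * (x i) ^ k

section BrauerBound

variable {n k : ℕ} (A : (Fin (k+1) → Fin n) → ℝ)

lemma rT_nonneg (i : Fin n) : 0 ≤ rT A i :=
  sum_nonneg fun _ _ => abs_nonneg _

variable {A} {lam : ℝ} {x : Fin n → ℝ}
  (hx : ∀ i, (∑ α : Fin k → Fin n, A (Fin.cons i α) * ∏ l, x (α l)) = lam * (x i) ^ k)
include hx

lemma abs_sub_diag_mul_pow_le (i : Fin n) :
    |lam - A (fun _ => i)| * |x i| ^ k ≤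
      ∑ α ∈ univ.filter (fun α : Fin k → Fin n => α ≠ fun _ => i),
        |A (Fin.cons i α)| * ∏ l, |x (α l)| := by
  have hsplit : (lam - A (fun _ => i)) * x i ^ k =
      ∑ α ∈ univ.filter (fun α : Fin k → Fin n => α ≠ fun _ => i),
        A (Fin.cons i α) * ∏ l, x (α l) := by
    have hcons : (Fin.cons i fun _ => i : Fin (k+1) → Fin n) = fun _ => i :=
      Fin.cons_self_tail (fun _ => i)
    rw [filter_ne', sum_erase_eq_sub (mem_univ _), hx i, hcons]
    simp only [prod_const, card_univ, Fintype.card_fin]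
    ring
  calc |lam - A (fun _ => i)| * |x i| ^ k
      = |(lam - A (fun _ => i)) * x i ^ k| := by rw [abs_mul, abs_pow]
    _ ≤ ∑ α ∈ univ.filter (fun α : Fin k → Fin n => α ≠ fun _ => i),
          |A (Fin.cons i α) * ∏ l, x (α l)| := hsplit ▸ abs_sum_le_sum_abs _ _
    _ = _ := by simp only [abs_mul, abs_prod]

variable {t : Fin n} (hmax : ∀ i, |x i| ≤ |x t|)
include hmax

omit hx in
lemma prod_abs_le_pow_of_forall_le (α : Fin k → Fin n) : ∏ l, |x (α l)| ≤ |x t| ^ k := by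
  simpa using prod_le_prod (s := univ) (fun l _ => abs_nonneg (x (α l))) (fun l _ => hmax (α l))

lemma abs_sub_diag_mul_pow_le_rT_mul (j : Fin n) :
    |lam - A (fun _ => j)| * |x j| ^ k ≤ rT A j * |x t| ^ k := by
  refine (abs_sub_diag_mul_pow_le hx j).trans ?_
  rw [rT, sum_mul]
  exact sum_le_sum fun α _ =>
    mul_le_mul_of_nonneg_left (prod_abs_le_pow_of_forall_le hmax α) (abs_nonneg _)

lemma abs_sub_diag_mul_pow_le_rTj_mul (hk : k ≠ 0) {j : Fin n} (hjt : j ≠ t) :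
    |lam - A (fun _ => t)| * |x t| ^ k ≤
      rTj A t j * |x t| ^ k + |A (Fin.cons t fun _ => j)| * |x j| ^ k := by
  have : Nonempty (Fin k) := ⟨⟨0, Nat.pos_of_ne_zero hk⟩⟩
  have hj_mem : (fun _ => j : Fin k → Fin n) ∈
      univ.filter (fun α : Fin k → Fin n => α ≠ fun _ => t) := by
    simpa using fun h => hjt (congrFun h (Classical.arbitrary _))
  have hgap := single_le_sum (f := fun α : Fin k → Fin n =>
      |A (Fin.cons t α)| * (|x t| ^ k - ∏ l, |x (α l)|))
    (fun α _ => mul_nonneg (abs_nonneg _)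
      (sub_nonneg.2 (prod_abs_le_pow_of_forall_le hmax α))) hj_mem
  simp only [mul_sub, sum_sub_distrib, ← sum_mul, prod_const, card_univ,
    Fintype.card_fin] at hgap
  have hrow := abs_sub_diag_mul_pow_le hx t
  rw [rTj, rT]
  linarith

lemma brauer_bound_of_forall_abs_le (hk : k ≠ 0) (hxt : x t ≠ 0) {j : Fin n} (hjt : j ≠ t) :
    (|lam - A (fun _ => t)| - rTj A t j) * |lam - A (fun _ => j)| ≤
      |A (Fin.cons t fun _ => j)| * rT A j := by
  have hP : 0 < |x t| ^ k := pow_pos (abs_pos.2 hxt) k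
  have hrow_t := abs_sub_diag_mul_pow_le_rTj_mul hx hmax hk hjt
  have hrow_j := abs_sub_diag_mul_pow_le_rT_mul hx hmax j
  refine le_of_mul_le_mul_right ?_ hP
  calc (|lam - A (fun _ => t)| - rTj A t j) * |lam - A (fun _ => j)| * |x t| ^ k
      = ((|lam - A (fun _ => t)| - rTj A t j) * |x t| ^ k) * |lam - A (fun _ => j)| := by ring
    _ ≤ (|A (Fin.cons t fun _ => j)| * |x j| ^ k) * |lam - A (fun _ => j)| :=
        mul_le_mul_of_nonneg_right (by linarith) (abs_nonneg _)
    _ = |A (Fin.cons t fun _ => j)| * (|lam - A (fun _ => j)| * |x j| ^ k) := by ring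
    _ ≤ |A (Fin.cons t fun _ => j)| * (rT A j * |x t| ^ k) := by gcongr
    _ = _ := by ring

end BrauerBound

theorem IsHEig.exists_forall_ne_brauer_bound {n k : ℕ} {A : (Fin (k+1) → Fin n) → ℝ} {lam : ℝ}
    (hk : k ≠ 0) (h : IsHEig A lam) :
    ∃ t, ∀ j ≠ t, (|lam - A (fun _ => t)| - rTj A t j) * |lam - A (fun _ => j)| ≤
      |A (Fin.cons t fun _ => j)| * rT A j := by
  obtain ⟨x, hx0, hx⟩ := h
  obtain ⟨i, hi⟩ := Function.ne_iff.mp hx0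
  obtain ⟨t, -, hmax⟩ := exists_max_image univ (fun i => |x i|) ⟨i, mem_univ i⟩
  have hxt : x t ≠ 0 := abs_pos.1 ((abs_pos.2 hi).trans_le (hmax i (mem_univ i)))
  exact ⟨t, fun j hjt =>
    brauer_bound_of_forall_abs_le hx (fun i => hmax i (mem_univ i)) hk hxt hjt⟩

lemma pos_of_brauer_bound_of_lt {lam a c r r' b : ℝ} (ha : 0 < a) (hc : 0 < c) (hb : 0 ≤ b)
    (hr : 0 ≤ r) (hdom : r * b < (|a| - r') * |c|)
    (hbound : (|lam - a| - r') * |lam - c| ≤ b * r) : 0 < lam := by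
  by_contra! hlam
  rw [abs_of_pos ha, abs_of_pos hc] at hdom
  rw [abs_of_nonpos (by linarith), abs_of_nonpos (by linarith)] at hbound
  have hgap : 0 < a - r' := pos_of_mul_pos_left ((mul_nonneg hr hb).trans_lt hdom) hc.le
  nlinarith

theorem stmt17_general {n k : ℕ} (hm : Even (k+1))
    (A : (Fin (k+1) → Fin n) → ℝ)
    (S : Finset (Fin n)) (hS : S.Nonempty) (hS' : S ≠ Finset.univ)
    (hdiag : ∀ i : Fin n, 0 < A (fun _ => i))
    (hqd : ∀ i ∈ S, ∀ j ∈ Sᶜ,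
      rT A j * |A (Fin.cons i fun _ => j)| <
        (|A (fun _ => i)| - rTj A i j) * |A (fun _ => j)| ∧
      rT A i * |A (Fin.cons j fun _ => i)| <
        (|A (fun _ => j)| - rTj A j i) * |A (fun _ => i)|) :
    ∀ lam : ℝ, IsHEig A lam → 0 < lam := by
  intro lam hlam
  have hk : k ≠ 0 := by rintro rfl; exact Nat.not_even_one hm
  obtain ⟨t, hbound⟩ := hlam.exists_forall_ne_brauer_bound hk
  have pos_of_dominant : ∀ j ≠ t, rT A j * |A (Fin.cons t fun _ => j)| <
      (|A (fun _ => t)| - rTj A t j) * |A (fun _ => j)| → 0 < lam := fun j hjt hdom =>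
    pos_of_brauer_bound_of_lt (hdiag t) (hdiag j) (abs_nonneg _) (rT_nonneg A j) hdom
      (hbound j hjt)
  by_cases ht : t ∈ S
  · obtain ⟨j, -, hj⟩ := exists_of_ssubset (ssubset_univ_iff.2 hS')
    exact pos_of_dominant j (fun h => hj (h ▸ ht)) (hqd t ht j (mem_compl.2 hj)).1
  · obtain ⟨i, hi⟩ := hS
    exact pos_of_dominant i (fun h => ht (h ▸ hi)) (hqd i hi t (mem_compl.2 ht)).2

theorem stmt17 {n k : ℕ} (hn : 2 ≤ n) (hm : Even (k+1))
    (A : (Fin (k+1) → Fin n) → ℝ) (hsym : SymTensor A)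
    (S : Finset (Fin n)) (hS : S.Nonempty) (hS' : S ≠ Finset.univ)
    (hdiag : ∀ i : Fin n, 0 < A (fun _ => i))
    (hqd : ∀ i ∈ S, ∀ j ∈ Sᶜ,
      rT A j * |A (Fin.cons i fun _ => j)| <
        (|A (fun _ => i)| - rTj A i j) * |A (fun _ => j)| ∧
      rT A i * |A (Fin.cons j fun _ => i)| <
        (|A (fun _ => j)| - rTj A j i) * |A (fun _ => i)|) :
    ∀ lam : ℝ, IsHEig A lam → 0 < lam :=
  stmt17_general hm A S hS hS' hdiag hqd
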